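/- arXiv:1001.0432 — 2 statements merged into one kernel-verified Lean document; each statement's English description precedes it below -/
import Mathlib

section
/- (Dunkl, Heckman.) Let W ⊂ O(ℝ^r) be a finite real reflection group with reflections S, roots α_s, and conjugation-invariant parameters c : S → ℂ, and let e_1,…,e_r be the standard orthonormal basis of ℝ^r. Then for every W-invariant rational function f ∈ ℂ(x_1,…,x_r) one has Σ_{i=1}^r D_{e_i}^2 f = Δf − Σ_{s∈S} c_s · ((α_s,α_s)/α_s) · ∂_{α_s^∨} f, where Δ = Σ_i ∂_{e_i}^2 is the Laplacian, α_s^∨ = 2α_s/(α_s,α_s), and α_s also denotes the linear function x ↦ (α_s, x). -/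
/-! For `W`-invariant `f` the difference quotients in `D_{eᵢ} f` vanish, so `D_{eᵢ} f = ∂ᵢ f`.
Applying `D_{eᵢ}` again and summing over `i`, a reflection `s` contributes
`c_s (∂_{α_s} f − s·∂_{α_s} f) / α_s`. A derivation of `ℂ(x₁,…,x_r)` is determined by its values on
the coordinates, hence `w·∂_v g = ∂_{wv} (w·g)`; with `f` invariant and `s α_s = −α_s` this gives
`s·∂_{α_s} f = −∂_{α_s} f`, and the contribution becomes `2 c_s ∂_{α_s} f / α_s`. -/

open MvPolynomial

noncomputable section

/-- The matrix underlying an element of a subgroup of `GL_r(ℝ)`. -/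
def matOfR {r : ℕ} {W : Subgroup (Matrix.GeneralLinearGroup (Fin r) ℝ)} (w : W) :
    Matrix (Fin r) (Fin r) ℝ :=
  ((w : Matrix.GeneralLinearGroup (Fin r) ℝ) : Matrix (Fin r) (Fin r) ℝ)

/-- The complexified linear polynomial `Σᵢ aᵢ xᵢ` with real coefficient vector `a`. -/
def linFormR {r : ℕ} (a : Fin r → ℝ) : MvPolynomial (Fin r) ℂ :=
  ∑ i, MvPolynomial.C ((a i : ℂ)) * MvPolynomial.X i

/-- The Dunkl operator `D_a` of a real reflection group on `K = ℂ(x₁,…,x_r)`: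
`D_a f = ∂_a f − Σ_{s∈S} c_s (α_s, a) (f − s·f)/α_s`. -/
def dunklR (r : ℕ) (K : Type) [Field K] [Algebra ℂ K]
    [Algebra (MvPolynomial (Fin r) ℂ) K] [IsScalarTower ℂ (MvPolynomial (Fin r) ℂ) K]
    {W : Subgroup (Matrix.GeneralLinearGroup (Fin r) ℝ)}
    (S : Finset W) (c : W → ℂ) (α : W → Fin r → ℝ)
    (ρ : W →* (K ≃ₐ[ℂ] K)) (pd : Fin r → Derivation ℂ K K)
    (a : Fin r → ℝ) : K →ₗ[ℂ] K :=
  (∑ i, (a i : ℂ) • (pd i).toLinearMap)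
    - ∑ s ∈ S, (c s * (((∑ i, α s i * a i : ℝ) : ℂ))) •
        ((LinearMap.mulLeft ℂ
            ((algebraMap (MvPolynomial (Fin r) ℂ) K (linFormR (α s)))⁻¹)).comp
          (LinearMap.id - (ρ s).toLinearMap))

theorem Derivation.eq_of_forall_algebraMap {R A B M : Type*} [CommRing R] [CommRing A]
    [CommRing B] [Algebra R B] [Algebra A B] [AddCommGroup M] [Module B M] [Module R M]
    (S : Submonoid A) [IsLocalization S B] {D₁ D₂ : Derivation R B M}
    (h : ∀ a, D₁ (algebraMap A B a) = D₂ (algebraMap A B a)) : D₁ = D₂ := by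
  ext b
  obtain ⟨⟨a, s⟩, rfl⟩ := IsLocalization.mk'_surjective S b
  change D₁ (IsLocalization.mk' B a s) = D₂ (IsLocalization.mk' B a s)
  have hspec := IsLocalization.mk'_spec B a s
  have h₁ := congrArg D₁ hspec
  have h₂ := congrArg D₂ hspec
  rw [Derivation.leibniz] at h₁ h₂
  rw [h, h, ← h₂] at h₁
  exact ((IsLocalization.map_units B s).smul_left_cancel).1 (add_left_cancel h₁)

theorem MvPolynomial.derivation_ext_of_isLocalization {R σ K : Type*} [CommRing R] [CommRing K]
    [Algebra R K] [Algebra (MvPolynomial σ R) K] [IsScalarTower R (MvPolynomial σ R) K]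
    (S : Submonoid (MvPolynomial σ R)) [IsLocalization S K] {D₁ D₂ : Derivation R K K}
    (h : ∀ i, D₁ (algebraMap _ K (X i : MvPolynomial σ R)) =
      D₂ (algebraMap _ K (X i : MvPolynomial σ R))) :
    D₁ = D₂ :=
  Derivation.eq_of_forall_algebraMap S fun a =>
    DFunLike.congr_fun (MvPolynomial.derivation_ext
      (D₁ := D₁.compAlgebraMap (MvPolynomial σ R)) (D₂ := D₂.compAlgebraMap _) h) a

def Derivation.conj {R A : Type*} [CommSemiring R] [CommSemiring A] [Algebra R A]
    (e : A ≃ₐ[R] A) (D : Derivation R A A) : Derivation R A A where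
  toLinearMap := e.toLinearMap ∘ₗ D.toLinearMap ∘ₗ e.symm.toLinearMap
  map_one_eq_zero' := by simp
  leibniz' a b := by simp

@[simp]
theorem Derivation.conj_apply {R A : Type*} [CommSemiring R] [CommSemiring A] [Algebra R A]
    (e : A ≃ₐ[R] A) (D : Derivation R A A) (a : A) : D.conj e a = e (D (e.symm a)) := rfl

section DirectionalDerivative

variable {r : ℕ} {K : Type*} [CommRing K] [Algebra ℂ K] (pd : Fin r → Derivation ℂ K K)

def dirDeriv (v : Fin r → ℝ) : Derivation ℂ K K := ∑ i, (v i : ℂ) • pd i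

theorem dirDeriv_apply (v : Fin r → ℝ) (f : K) :
    dirDeriv pd v f = ∑ i, (v i : ℂ) • pd i f := by
  rw [dirDeriv, ← Derivation.coeFnAddMonoidHom_apply, map_sum, Finset.sum_apply]
  rfl

theorem dirDeriv_single (i : Fin r) : dirDeriv pd (Pi.single i 1) = pd i := by
  ext f
  simp [dirDeriv_apply, Pi.single_apply]

theorem dirDeriv_sub (v w : Fin r → ℝ) :
    dirDeriv pd (v - w) = dirDeriv pd v - dirDeriv pd w := by
  simp [dirDeriv, sub_smul]

theorem dirDeriv_smul (t : ℝ) (v : Fin r → ℝ) :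
    dirDeriv pd (t • v) = (t : ℂ) • dirDeriv pd v := by
  simp [dirDeriv, Finset.smul_sum, mul_smul]

variable [Algebra (MvPolynomial (Fin r) ℂ) K]

def IsCoordinatePartials (pd : Fin r → Derivation ℂ K K) : Prop :=
  ∀ (i : Fin r) (q : MvPolynomial (Fin r) ℂ),
    pd i (algebraMap (MvPolynomial (Fin r) ℂ) K q)
      = algebraMap (MvPolynomial (Fin r) ℂ) K (MvPolynomial.pderiv i q)

variable {pd}

theorem dirDeriv_algebraMap_X
    (hpd : IsCoordinatePartials pd) (v : Fin r → ℝ) (k : Fin r) :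
    dirDeriv pd v (algebraMap (MvPolynomial (Fin r) ℂ) K (X k)) = algebraMap ℂ K (v k) := by
  simp [dirDeriv_apply, hpd _ _, Pi.single_apply, Algebra.smul_def]

theorem pderiv_linFormR (a : Fin r → ℝ) (i : Fin r) :
    pderiv i (linFormR a) = C (a i : ℂ) := by
  simp [linFormR, pderiv_X, Pi.single_apply]

theorem dirDeriv_algebraMap_linFormR [IsScalarTower ℂ (MvPolynomial (Fin r) ℂ) K]
    (hpd : IsCoordinatePartials pd) (v a : Fin r → ℝ) :
    dirDeriv pd v (algebraMap (MvPolynomial (Fin r) ℂ) K (linFormR a)) =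
      algebraMap ℂ K ((a ⬝ᵥ v : ℝ) : ℂ) := by
  simp only [dirDeriv_apply, hpd _ _, pderiv_linFormR, ← MvPolynomial.algebraMap_eq,
    ← IsScalarTower.algebraMap_apply, Algebra.smul_def, ← map_mul, ← map_sum]
  simp [dotProduct, mul_comm]

end DirectionalDerivative

section ReflectionGroup

open Matrix

variable {r : ℕ} {K : Type} [Field K] [Algebra ℂ K]
  [Algebra (MvPolynomial (Fin r) ℂ) K] [IsScalarTower ℂ (MvPolynomial (Fin r) ℂ) K]
  {W : Subgroup (Matrix.GeneralLinearGroup (Fin r) ℝ)} {ρ : W →* (K ≃ₐ[ℂ] K)}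
  {pd : Fin r → Derivation ℂ K K}

variable (ρ) in
def IsSubstitutionAction : Prop :=
  ∀ (w : W) (i : Fin r),
    ρ w (algebraMap (MvPolynomial (Fin r) ℂ) K (MvPolynomial.X i)) =
      algebraMap (MvPolynomial (Fin r) ℂ) K
        (∑ j, MvPolynomial.C ((matOfR w⁻¹ i j : ℂ)) * MvPolynomial.X j)

theorem conj_dirDeriv [IsFractionRing (MvPolynomial (Fin r) ℂ) K]
    (hρ : IsSubstitutionAction ρ) (hpd : IsCoordinatePartials pd) (w : W) (v : Fin r → ℝ) :
    (dirDeriv pd v).conj (ρ w) = dirDeriv pd (matOfR w *ᵥ v) := by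
  refine MvPolynomial.derivation_ext_of_isLocalization (nonZeroDivisors (MvPolynomial (Fin r) ℂ))
    fun k => ?_
  rw [Derivation.conj_apply, ← AlgEquiv.aut_inv, ← map_inv, hρ, inv_inv]
  change ρ w (dirDeriv pd v (algebraMap _ K (linFormR (matOfR w k)))) = _
  rw [dirDeriv_algebraMap_linFormR hpd, AlgEquiv.commutes, dirDeriv_algebraMap_X hpd]
  rfl

theorem map_dirDeriv [IsFractionRing (MvPolynomial (Fin r) ℂ) K]
    (hρ : IsSubstitutionAction ρ) (hpd : IsCoordinatePartials pd) (w : W) (v : Fin r → ℝ)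
    (f : K) :
    ρ w (dirDeriv pd v f) = dirDeriv pd (matOfR w *ᵥ v) (ρ w f) := by
  rw [← conj_dirDeriv hρ hpd, Derivation.conj_apply, AlgEquiv.symm_apply_apply]

theorem dunklR_apply (S : Finset W) (c : W → ℂ) (α : W → Fin r → ℝ) (a : Fin r → ℝ) (g : K) :
    dunklR r K S c α ρ pd a g = dirDeriv pd a g - ∑ s ∈ S, (c s * ((α s ⬝ᵥ a : ℝ) : ℂ)) •
      ((algebraMap (MvPolynomial (Fin r) ℂ) K (linFormR (α s)))⁻¹ * (g - ρ s g)) := by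
  simp [dunklR, dirDeriv_apply, dotProduct]

theorem dunklR_apply_of_forall_mem_fixed {S : Finset W} (c : W → ℂ) (α : W → Fin r → ℝ)
    {f : K} (hf : ∀ s ∈ S, ρ s f = f) (a : Fin r → ℝ) :
    dunklR r K S c α ρ pd a f = dirDeriv pd a f := by
  rw [dunklR_apply, Finset.sum_eq_zero fun s hs => by rw [hf s hs, sub_self, mul_zero, smul_zero],
    sub_zero]

end ReflectionGroup

theorem dunkl_squares_restrict_to_invariants_general (r : ℕ)
    (K : Type) [Field K] [Algebra ℂ K]
    [Algebra (MvPolynomial (Fin r) ℂ) K] [IsScalarTower ℂ (MvPolynomial (Fin r) ℂ) K]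
    [IsFractionRing (MvPolynomial (Fin r) ℂ) K]
    (W : Subgroup (Matrix.GeneralLinearGroup (Fin r) ℝ))
    (S : Finset W)
    (α : W → Fin r → ℝ)
    (hrefl : ∀ s ∈ S, ∀ v : Fin r → ℝ,
      Matrix.mulVec (matOfR s) v
        = v - (2 * (∑ i, α s i * v i) / (∑ i, α s i * α s i)) • α s)
    (c : W → ℂ)
    (ρ : W →* (K ≃ₐ[ℂ] K))
    (hρ : ∀ (w : W) (i : Fin r),
      ρ w (algebraMap (MvPolynomial (Fin r) ℂ) K (MvPolynomial.X i)) =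
        algebraMap (MvPolynomial (Fin r) ℂ) K
          (∑ j, MvPolynomial.C ((matOfR w⁻¹ i j : ℂ)) * MvPolynomial.X j))
    (pd : Fin r → Derivation ℂ K K)
    (hpd : ∀ (i : Fin r) (q : MvPolynomial (Fin r) ℂ),
      pd i (algebraMap (MvPolynomial (Fin r) ℂ) K q)
        = algebraMap (MvPolynomial (Fin r) ℂ) K (MvPolynomial.pderiv i q)) :
    ∀ f : K, (∀ w : W, ρ w f = f) →
      (∑ i, dunklR r K S c α ρ pd (Pi.single i 1)
          (dunklR r K S c α ρ pd (Pi.single i 1) f))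
        = (∑ i, pd i (pd i f))
          - ∑ s ∈ S, (c s * (((∑ i, α s i * α s i : ℝ) : ℂ))) •
              ((algebraMap (MvPolynomial (Fin r) ℂ) K (linFormR (α s)))⁻¹ *
                ∑ i, (((2 / (∑ j, α s j * α s j)) * α s i : ℝ) : ℂ) • pd i f) := by
  intro f hf
  set L : W → K := fun s => (algebraMap (MvPolynomial (Fin r) ℂ) K (linFormR (α s)))⁻¹
  have hsq (i : Fin r) : dunklR r K S c α ρ pd (Pi.single i 1)
      (dunklR r K S c α ρ pd (Pi.single i 1) f) =
        pd i (pd i f) - ∑ s ∈ S, (c s * (α s i : ℂ)) • (L s * (pd i f - ρ s (pd i f))) := by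
    rw [dunklR_apply_of_forall_mem_fixed c α (fun s _ => hf s), dunklR_apply, dirDeriv_single]
    simp only [dotProduct_single, mul_one, L]
  rw [Finset.sum_congr rfl fun i _ => hsq i, Finset.sum_sub_distrib, Finset.sum_comm]
  congr 1
  refine Finset.sum_congr rfl fun s hs => ?_
  set Q : ℝ := ∑ j, α s j * α s j
  have hcoroot : α s - (matOfR s).mulVec (α s) = (2 * Q / Q) • α s := by
    rw [hrefl s hs, sub_sub_cancel]
  calc ∑ i, (c s * (α s i : ℂ)) • (L s * (pd i f - ρ s (pd i f)))
      = c s • (L s * (dirDeriv pd (α s) f - ρ s (dirDeriv pd (α s) f))) := by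
        simp only [dirDeriv_apply, map_sum, map_smul, ← Finset.sum_sub_distrib, ← smul_sub,
          Finset.mul_sum, Finset.smul_sum, mul_smul, mul_smul_comm]
    _ = c s • (L s * (((2 * Q / Q : ℝ) : ℂ) • dirDeriv pd (α s) f)) := by
        rw [map_dirDeriv hρ hpd, hf, ← Derivation.sub_apply, ← dirDeriv_sub, hcoroot,
          dirDeriv_smul, Derivation.smul_apply]
    _ = (c s * (Q : ℂ)) • (L s * dirDeriv pd ((2 / Q) • α s) f) := by
        rw [dirDeriv_smul, Derivation.smul_apply, mul_smul_comm, mul_smul_comm, smul_smul,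
          smul_smul]
        congr 1
        push_cast
        ring
    _ = _ := by rw [dirDeriv_apply]; rfl

/-- **Dunkl, Heckman.**  Let `W ⊆ O(ℝ^r)` be a finite real reflection group with
reflections `S`, roots `α_s`, and conjugation-invariant parameters `c`, acting on
`K = ℂ(x₁,…,x_r)`.  Then for every `W`-invariant rational function `f`,
`Σᵢ D_{eᵢ}² f = Δf − Σ_{s∈S} c_s ((α_s,α_s)/α_s) ∂_{α_s^∨} f`, where `eᵢ` is the standard
orthonormal basis, `Δ = Σᵢ ∂ᵢ²`, and `α_s^∨ = 2α_s/(α_s,α_s)`. -/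
theorem dunkl_squares_restrict_to_invariants (r : ℕ) (hr : 1 ≤ r)
    (K : Type) [Field K] [Algebra ℂ K]
    [Algebra (MvPolynomial (Fin r) ℂ) K] [IsScalarTower ℂ (MvPolynomial (Fin r) ℂ) K]
    [IsFractionRing (MvPolynomial (Fin r) ℂ) K]
    (W : Subgroup (Matrix.GeneralLinearGroup (Fin r) ℝ)) [Finite W]
    (hOrth : ∀ w : W, (Matrix.transpose (matOfR w)) * matOfR w = 1)
    (S : Finset W)
    (hS : ∀ s : W, s ∈ S ↔
      Matrix.rank ((1 : Matrix (Fin r) (Fin r) ℝ) - matOfR s) = 1)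
    (α : W → Fin r → ℝ)
    (hα : ∀ s ∈ S, α s ≠ 0)
    (hrefl : ∀ s ∈ S, ∀ v : Fin r → ℝ,
      Matrix.mulVec (matOfR s) v
        = v - (2 * (∑ i, α s i * v i) / (∑ i, α s i * α s i)) • α s)
    (c : W → ℂ)
    (hc : ∀ (g s : W), s ∈ S → c (g * s * g⁻¹) = c s)
    (ρ : W →* (K ≃ₐ[ℂ] K))
    (hρ : ∀ (w : W) (i : Fin r),
      ρ w (algebraMap (MvPolynomial (Fin r) ℂ) K (MvPolynomial.X i)) =
        algebraMap (MvPolynomial (Fin r) ℂ) K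
          (∑ j, MvPolynomial.C ((matOfR w⁻¹ i j : ℂ)) * MvPolynomial.X j))
    (pd : Fin r → Derivation ℂ K K)
    (hpd : ∀ (i : Fin r) (q : MvPolynomial (Fin r) ℂ),
      pd i (algebraMap (MvPolynomial (Fin r) ℂ) K q)
        = algebraMap (MvPolynomial (Fin r) ℂ) K (MvPolynomial.pderiv i q)) :
    ∀ f : K, (∀ w : W, ρ w f = f) →
      (∑ i, dunklR r K S c α ρ pd (Pi.single i 1)
          (dunklR r K S c α ρ pd (Pi.single i 1) f))
        = (∑ i, pd i (pd i f))
          - ∑ s ∈ S, (c s * (((∑ i, α s i * α s i : ℝ) : ℂ))) •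
              ((algebraMap (MvPolynomial (Fin r) ℂ) K (linFormR (α s)))⁻¹ *
                ∑ i, (((2 / (∑ j, α s j * α s j)) * α s i : ℝ) : ℂ) • pd i f) :=
  dunkl_squares_restrict_to_invariants_general r K W S α hrefl c ρ hρ pd hpd
end
end

section
/- Let p ≥ 1, let y_1,…,y_p be distinct complex numbers, and let μ_1,…,μ_p ∈ ℂ be such that N := Σ_j μ_j is an integer with N > −p. Define the formal Laurent series a(z) := z^N ∏_{j=1}^p (1 − y_j/z)^{μ_j} ∈ ℂ((z^{−1})), where (1−w)^{μ} := Σ_{k≥0} (μ(μ−1)⋯(μ−k+1)/k!) (−w)^k is the formal binomial series. Suppose that for every i = 0, 1, …, p−2 the coefficient of z^{−1} in a(z)·z^i vanishes. Then a(z) is a polynomial in z, i.e. the coefficient of z^{−k} in a(z) vanishes for every k ≥ 1. -/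
/-- The generalized binomial coefficient `μ(μ−1)⋯(μ−k+1)/k!` for `μ ∈ ℂ`. -/
noncomputable def genBinom (μ : ℂ) (k : ℕ) : ℂ :=
  (∏ m ∈ Finset.range k, (μ - m)) / (k.factorial : ℂ)

/-- The power series `A(w) = ∏ⱼ (1 − yⱼ w)^{μⱼ} ∈ ℂ[[w]]`, where
`(1 − w)^μ = Σ_k binom(μ,k) (−w)^k` is the formal binomial series. -/
noncomputable def binomProdSeries (p : ℕ) (y μ : Fin p → ℂ) : PowerSeries ℂ :=
  ∏ j : Fin p, PowerSeries.mk fun k => genBinom (μ j) k * (-(y j)) ^ k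

/-- The coefficient of `z^j` in the formal Laurent series `a(z) = z^N · A(z⁻¹) ∈ ℂ((z⁻¹))`,
namely the coefficient of `w^{N−j}` in `A(w)` (and `0` if `N − j < 0`). -/
noncomputable def laurentZCoeff (A : PowerSeries ℂ) (N : ℤ) (j : ℤ) : ℂ :=
  if 0 ≤ N - j then PowerSeries.coeff (N - j).toNat A else 0

/-!
`A(w) = ∏ⱼ (1 − yⱼ w)^{μⱼ}` satisfies `Q · wA' = S · A` with `Q = ∏ⱼ (1 − yⱼ w)` of degree `≤ p`
and `S − N Q` of degree `< p`. Comparing coefficients of `wⁿ` gives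
`Σ_{i+j=n} (j Qᵢ − Sᵢ) aⱼ = 0`, where for `i ≥ p` the coefficient is `Qᵢ (j − N)`. Hence for
`n ≥ N + p` every term with `j < n` dies: `aⱼ = 0` by induction when `j > N`, and otherwise
`i ≥ p` and `j = N` or `Qᵢ = 0`. What is left is `n aₙ = 0`, with `n ≥ N + p > 0`. The residue
hypotheses are exactly `aₙ = 0` for `N < n < N + p`, which starts the induction.
-/

open PowerSeries Polynomial Finset

theorem Polynomial.degree_mul_lt_of_degree_lt_of_natDegree_le {R : Type*} [Semiring R]
    {T Q : R[X]} {p q : ℕ} (hT : T.degree < p) (hQ : Q.natDegree ≤ q) :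
    (T * Q).degree < ↑(p + q) :=
  calc (T * Q).degree ≤ T.degree + Q.degree := degree_mul_le T Q
    _ ≤ T.degree + q := by gcongr; exact degree_le_of_natDegree_le hQ
    _ < p + q := WithBot.add_lt_add_right (WithBot.natCast_ne_bot q) hT

namespace PowerSeries

variable {R : Type*} [CommRing R]

theorem coeff_X_mul_derivative (A : R⟦X⟧) (n : ℕ) :
    coeff n (X * d⁄dX R A) = n * coeff n A := by
  cases n with
  | zero => simp
  | succ n => rw [coeff_succ_X_mul, coeff_derivative, mul_comm]; push_cast; rfl

/-- The equation `Q · θA = S · A`, `θ = X d⁄dX`, has exponent `0` at `X = 0` and exponent `N` at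
`X = ∞`. -/
structure EulerEquation (A : R⟦X⟧) (p : ℕ) (N : R) (Q S : R[X]) : Prop where
  mul_X_derivative_eq : (Q : R⟦X⟧) * (X * d⁄dX R A) = (S : R⟦X⟧) * A
  coeff_zero_left : Q.coeff 0 = 1
  coeff_zero_right : S.coeff 0 = 0
  natDegree_left_le : Q.natDegree ≤ p
  degree_sub_lt : (S - Polynomial.C N * Q).degree < p

namespace EulerEquation

theorem one : EulerEquation (1 : R⟦X⟧) 0 0 1 0 where
  mul_X_derivative_eq := by simp
  coeff_zero_left := by simp
  coeff_zero_right := by simp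
  natDegree_left_le := by simp
  degree_sub_lt := by simp

theorem mul {A B : R⟦X⟧} {p q : ℕ} {N M : R} {Q S Q' S' : R[X]}
    (hA : EulerEquation A p N Q S) (hB : EulerEquation B q M Q' S') :
    EulerEquation (A * B) (p + q) (N + M) (Q * Q') (S * Q' + Q * S') where
  mul_X_derivative_eq := by
    rw [Derivation.leibniz, smul_eq_mul, smul_eq_mul]
    simp only [Polynomial.coe_mul, Polynomial.coe_add]
    linear_combination (Q' * B : R⟦X⟧) * hA.mul_X_derivative_eq +
      (Q * A : R⟦X⟧) * hB.mul_X_derivative_eq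
  coeff_zero_left := by rw [mul_coeff_zero, hA.coeff_zero_left, hB.coeff_zero_left, one_mul]
  coeff_zero_right := by
    rw [coeff_add, mul_coeff_zero, mul_coeff_zero, hA.coeff_zero_right, hB.coeff_zero_right,
      zero_mul, mul_zero, add_zero]
  natDegree_left_le :=
    natDegree_mul_le.trans (add_le_add hA.natDegree_left_le hB.natDegree_left_le)
  degree_sub_lt := by
    have hsplit : S * Q' + Q * S' - Polynomial.C (N + M) * (Q * Q') =
        (S - Polynomial.C N * Q) * Q' + (S' - Polynomial.C M * Q') * Q := by
      simp only [map_add]; ring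
    rw [hsplit]
    refine (degree_add_le _ _).trans_lt (max_lt ?_ ?_)
    · exact degree_mul_lt_of_degree_lt_of_natDegree_le hA.degree_sub_lt hB.natDegree_left_le
    · rw [add_comm p q]
      exact degree_mul_lt_of_degree_lt_of_natDegree_le hB.degree_sub_lt hA.natDegree_left_le

theorem prod {ι : Type*} (s : Finset ι) {A : ι → R⟦X⟧} {p : ι → ℕ} {N : ι → R}
    (h : ∀ i ∈ s, ∃ Q S, EulerEquation (A i) (p i) (N i) Q S) :
    ∃ Q S, EulerEquation (∏ i ∈ s, A i) (∑ i ∈ s, p i) (∑ i ∈ s, N i) Q S := by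
  classical
  induction s using Finset.induction_on with
  | empty => exact ⟨1, 0, by simpa using one⟩
  | insert a s ha ih =>
    obtain ⟨Q, S, hA⟩ := h a (mem_insert_self a s)
    obtain ⟨Q', S', hB⟩ := ih fun i hi => h i (mem_insert_of_mem hi)
    rw [prod_insert ha, sum_insert ha, sum_insert ha]
    exact ⟨_, _, hA.mul hB⟩

variable {A : R⟦X⟧} {p : ℕ} {Q S : R[X]}

theorem coeff_right_of_le {N : R} (h : EulerEquation A p N Q S) {i : ℕ} (hi : p ≤ i) :
    S.coeff i = N * Q.coeff i := by
  have := coeff_eq_zero_of_degree_lt (n := i) (h.degree_sub_lt.trans_le (by exact_mod_cast hi))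
  rwa [coeff_sub, Polynomial.coeff_C_mul, sub_eq_zero] at this

theorem sum_antidiagonal_eq_zero {N : R} (h : EulerEquation A p N Q S) (n : ℕ) :
    ∑ ij ∈ antidiagonal n, (Q.coeff ij.1 * ij.2 - S.coeff ij.1) * coeff ij.2 A = 0 := by
  have := congrArg (coeff n) h.mul_X_derivative_eq
  rw [coeff_mul n (Q : R⟦X⟧), coeff_mul n (S : R⟦X⟧)] at this
  simp only [Polynomial.coeff_coe, coeff_X_mul_derivative] at this
  simp only [sub_mul, sum_sub_distrib, mul_assoc, this, sub_self]

theorem coeff_eq_zero_of_lt [NoZeroDivisors R] [CharZero R] {N : ℤ}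
    (h : EulerEquation A p N Q S) (hN : -(p : ℤ) < N)
    (hgap : ∀ n : ℕ, N < n → n < N + p → coeff n A = 0) :
    ∀ n : ℕ, N < n → coeff n A = 0 := by
  intro n
  induction n using Nat.strong_induction_on with
  | _ n ih =>
  intro hn
  by_cases hnp : (n : ℤ) < N + p
  · exact hgap n hn hnp
  have hterm : ∀ ij ∈ antidiagonal n, ij ≠ (0, n) →
      (Q.coeff ij.1 * ij.2 - S.coeff ij.1) * coeff ij.2 A = 0 := by
    rintro ⟨i, j⟩ hij hne
    rw [HasAntidiagonal.mem_antidiagonal] at hij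
    rw [Ne, Prod.mk.injEq] at hne
    by_cases hjN : N < j
    · rw [ih j (by omega) hjN, mul_zero]
    rw [h.coeff_right_of_le (by omega : p ≤ i)]
    rcases (by omega : i = p ∨ p < i) with rfl | hpi
    · obtain rfl : (j : ℤ) = N := by omega
      push_cast
      ring
    · rw [coeff_eq_zero_of_natDegree_lt (h.natDegree_left_le.trans_lt hpi)]
      simp
  have hsum := h.sum_antidiagonal_eq_zero n
  rw [sum_eq_single_of_mem (0, n) (by simp) hterm, h.coeff_zero_left,
    h.coeff_zero_right, one_mul, sub_zero] at hsum
  have hn0 : (n : R) ≠ 0 := Nat.cast_ne_zero.mpr (by omega)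
  exact (mul_eq_zero.mp hsum).resolve_left hn0

end EulerEquation

end PowerSeries

theorem genBinom_succ_mul (μ : ℂ) (k : ℕ) :
    ((k : ℂ) + 1) * genBinom μ (k + 1) = (μ - k) * genBinom μ k := by
  have hk : (k.factorial : ℂ) ≠ 0 := Nat.cast_ne_zero.mpr k.factorial_ne_zero
  rw [genBinom, genBinom, prod_range_succ, Nat.factorial_succ]
  push_cast
  field_simp

theorem eulerEquation_mk_genBinom (μ y : ℂ) :
    EulerEquation (mk fun k => genBinom μ k * (-y) ^ k) 1 μ (1 - Polynomial.C y * Polynomial.X)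
      (Polynomial.C (-(μ * y)) * Polynomial.X) where
  mul_X_derivative_eq := by
    ext n
    simp only [Polynomial.coe_sub, Polynomial.coe_one, Polynomial.coe_mul, Polynomial.coe_C,
      Polynomial.coe_X, sub_mul, one_mul, map_sub, mul_assoc, PowerSeries.coeff_C_mul,
      coeff_X_mul_derivative]
    cases n with
    | zero => simp
    | succ n =>
      rw [coeff_succ_X_mul, coeff_succ_X_mul, coeff_X_mul_derivative, coeff_mk, coeff_mk]
      push_cast
      linear_combination (-y) ^ (n + 1) * genBinom_succ_mul μ n
  coeff_zero_left := by simp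
  coeff_zero_right := by simp
  natDegree_left_le := by compute_degree
  degree_sub_lt := by
    have hsub : Polynomial.C (-(μ * y)) * Polynomial.X -
        Polynomial.C μ * (1 - Polynomial.C y * Polynomial.X) = Polynomial.C (-μ) := by
      simp only [map_neg, map_mul]; ring
    rw [hsub]
    exact degree_C_le.trans_lt (by norm_num)

theorem residue_vanishing_implies_polynomial_general (p : ℕ) (y μ : Fin p → ℂ)
    (N : ℤ) (hNsum : (N : ℂ) = ∑ j : Fin p, μ j) (hNp : -(p : ℤ) < N)
    (hres : ∀ i : ℕ, i + 2 ≤ p →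
      laurentZCoeff (binomProdSeries p y μ) N (-1 - (i : ℤ)) = 0) :
    ∀ k : ℕ, 1 ≤ k → laurentZCoeff (binomProdSeries p y μ) N (-(k : ℤ)) = 0 := by
  obtain ⟨Q, S, hA⟩ : ∃ Q S, EulerEquation (binomProdSeries p y μ) p N Q S := by
    simpa [binomProdSeries, hNsum] using
      EulerEquation.prod univ fun j _ => ⟨_, _, eulerEquation_mk_genBinom (μ j) (y j)⟩
  have hcoeff := hA.coeff_eq_zero_of_lt hNp fun n hNn hnp => by
    have h := hres (n - N - 1).toNat (by omega)
    rwa [laurentZCoeff, if_pos (by omega),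
      show (N - (-1 - ((n - N - 1).toNat : ℤ))).toNat = n by omega] at h
  intro k hk
  rw [laurentZCoeff]
  split_ifs with h
  · exact hcoeff _ (by omega)
  · rfl

/-- Let `p ≥ 1`, let `y₁,…,y_p` be distinct complex numbers, and let `μ₁,…,μ_p ∈ ℂ` be such
that `N = Σⱼ μⱼ` is an integer with `N > −p`.  Consider the formal Laurent series
`a(z) = z^N ∏ⱼ (1 − yⱼ/z)^{μⱼ} ∈ ℂ((z⁻¹))`.  If for every `i = 0,…,p−2` the coefficient of
`z⁻¹` in `a(z)·z^i` (i.e. the coefficient of `z^{−1−i}` in `a(z)`) vanishes, then `a(z)` is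
a polynomial in `z`: its coefficient of `z^{−k}` vanishes for every `k ≥ 1`. -/
theorem residue_vanishing_implies_polynomial (p : ℕ) (hp : 1 ≤ p)
    (y μ : Fin p → ℂ) (hy : Function.Injective y)
    (N : ℤ) (hNsum : (N : ℂ) = ∑ j : Fin p, μ j) (hNp : -(p : ℤ) < N)
    (hres : ∀ i : ℕ, i + 2 ≤ p →
      laurentZCoeff (binomProdSeries p y μ) N (-1 - (i : ℤ)) = 0) :
    ∀ k : ℕ, 1 ≤ k → laurentZCoeff (binomProdSeries p y μ) N (-(k : ℤ)) = 0 :=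
  residue_vanishing_implies_polynomial_general p y μ N hNsum hNp hres
end
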